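/- The generating function G(x) = Σ_{k≥1} g_{k−1}x^k ∈ ℚ⟦x⟧ of the lush-tree sequence satisfies the quadratic identity 2G(x)² − (2x+1)G(x) + x + x² = 0; equivalently, (2x + 1 − 4G(x))² = 1 − 4x − 4x² in ℚ⟦x⟧. -/

import Mathlib

/-!
Weight a composition `(k₁, …, k_r)` by `∏ g_{kᵢ-1}` and let `T` be the generating function of
the compositions in which a part `1` can only be the last one. Splitting off the first part,
such a composition is empty, the single part `1`, or a part `k ≥ 2` followed by another such
composition, so `T = 1 + x + (G - x) T`. A composition counted by the recursion for `g` is an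
arbitrary first part followed by a nonempty such composition, so `G - x = G (T - 1)`; this holds
also at `x²`, as `g₁ = 1 = g₀²`. Eliminating `T` from the two equations gives the quadratic.
-/

open PowerSeries

noncomputable def genFun (g : ℕ → ℕ) : PowerSeries ℚ :=
  PowerSeries.mk fun m => if m = 0 then 0 else (g (m - 1) : ℚ)

namespace Composition

def consBlock {n : ℕ} (p : Σ k : Fin (n + 1), Composition (n - k)) : Composition (n + 1) where
  blocks := (p.1 + 1 : ℕ) :: p.2.blocks
  blocks_pos := by
    simp only [List.mem_cons, forall_eq_or_imp]
    exact ⟨Nat.succ_pos _, fun _ => p.2.blocks_pos⟩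
  blocks_sum := by
    simp only [List.sum_cons, p.2.blocks_sum]
    omega

theorem consBlock_bijective (n : ℕ) : Function.Bijective (@consBlock n) := by
  constructor
  · rintro ⟨k, c⟩ ⟨k', c'⟩ h
    obtain ⟨hk, hc⟩ := List.cons_eq_cons.mp congr(blocks $h)
    obtain rfl : k = k' := Fin.ext (by simpa using hk)
    obtain rfl : c = c' := Composition.ext hc
    rfl
  · rintro ⟨_ | ⟨a, t⟩, hpos, hsum⟩
    · simp at hsum
    · have ha : 0 < a := hpos List.mem_cons_self
      simp only [List.sum_cons] at hsum
      refine ⟨⟨⟨a - 1, by omega⟩, ⟨t, fun hi => hpos (List.mem_cons_of_mem a hi), by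
        simp only; omega⟩⟩, Composition.ext ?_⟩
      simp only [consBlock, List.cons.injEq, and_true]
      omega

theorem sum_blocks_succ {M : Type*} [AddCommMonoid M] (n : ℕ) (f : List ℕ → M) :
    ∑ c : Composition (n + 1), f c.blocks =
      ∑ k ∈ Finset.range (n + 1), ∑ c : Composition (n - k), f ((k + 1) :: c.blocks) := by
  rw [← (consBlock_bijective n).sum_comp, Fintype.sum_sigma]
  exact Fin.sum_univ_eq_sum_range (fun k => ∑ c : Composition (n - k), f ((k + 1) :: c.blocks)) _

theorem sum_blocks_zero {M : Type*} [AddCommMonoid M] (f : List ℕ → M) :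
    ∑ c : Composition 0, f c.blocks = f [] := by
  simp only [fun c : Composition 0 => c.blocks_eq_nil.mpr rfl, Finset.sum_const, Finset.card_univ,
    composition_card, Nat.zero_sub, pow_zero, one_smul]

end Composition

section LushSeries

variable (g : ℕ → ℕ)

def blockWeight (l : List ℕ) : ℚ := (l.map fun j => (g (j - 1) : ℚ)).prod

def IsLushRoot (l : List ℕ) : Prop :=
  1 < l.length ∧ ∀ i : Fin l.length, l.get i = 1 → (i : ℕ) = 0 ∨ (i : ℕ) = l.length - 1

def IsLushTail (l : List ℕ) : Prop :=
  ∀ i : Fin l.length, l.get i = 1 → (i : ℕ) + 1 = l.length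

instance : DecidablePred IsLushRoot := fun _ => inferInstanceAs (Decidable (_ ∧ _))

instance : DecidablePred IsLushTail := fun _ => inferInstanceAs (Decidable (∀ _, _))

theorem isLushTail_cons (a : ℕ) (l : List ℕ) :
    IsLushTail (a :: l) ↔ (a = 1 → l = []) ∧ IsLushTail l := by
  simp only [IsLushTail, Fin.forall_fin_succ, List.length_cons, List.get_eq_getElem,
    Fin.val_zero, Fin.val_succ, List.getElem_cons_zero, List.getElem_cons_succ,
    add_left_inj]
  simp [eq_comm, List.length_eq_zero_iff]

theorem isLushRoot_cons (a : ℕ) (l : List ℕ) :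
    IsLushRoot (a :: l) ↔ l ≠ [] ∧ IsLushTail l := by
  simp only [IsLushRoot, IsLushTail, Fin.forall_fin_succ, List.length_cons, List.get_eq_getElem,
    Fin.val_zero, Fin.val_succ, List.getElem_cons_succ, true_or, implies_true, true_and,
    add_tsub_cancel_right, Nat.add_eq_zero_iff, one_ne_zero, and_false, false_or,
    Nat.lt_add_left_iff_pos, List.length_pos_iff]

def lushTailWeight (l : List ℕ) : ℚ := if IsLushTail l then blockWeight g l else 0

def lushRootWeight (l : List ℕ) : ℚ := if IsLushRoot l then blockWeight g l else 0

noncomputable def lushTailSeries : ℚ⟦X⟧ :=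
  mk fun n => ∑ c : Composition n, lushTailWeight g c.blocks

noncomputable def lushRootSeries : ℚ⟦X⟧ :=
  mk fun n => ∑ c : Composition n, lushRootWeight g c.blocks

theorem genFun_eq_X_mul : genFun g = X * mk fun n => (g n : ℚ) := by
  ext (_ | n) <;> simp [genFun, coeff_succ_X_mul]

theorem coeff_succ_genFun_mul (H : ℚ⟦X⟧) (n : ℕ) :
    coeff (n + 1) (genFun g * H) = ∑ k ∈ Finset.range (n + 1), g k * coeff (n - k) H := by
  rw [genFun_eq_X_mul, mul_assoc, coeff_succ_X_mul, coeff_mul,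
    Finset.Nat.sum_antidiagonal_eq_sum_range_succ_mk]
  simp only [coeff_mk]

theorem constantCoeff_lushTailSeries : constantCoeff (lushTailSeries g) = 1 := by
  rw [← coeff_zero_eq_constantCoeff_apply, lushTailSeries, coeff_mk, Composition.sum_blocks_zero]
  simp [lushTailWeight, IsLushTail, blockWeight]

theorem sum_lushTailWeight_one_cons (m : ℕ) :
    ∑ c : Composition m, lushTailWeight g (1 :: c.blocks) = if m = 0 then (g 0 : ℚ) else 0 := by
  rcases m with _ | m
  · rw [Composition.sum_blocks_zero fun l => lushTailWeight g (1 :: l)]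
    simp [lushTailWeight, IsLushTail, blockWeight]
  · refine Finset.sum_eq_zero fun c _ => if_neg fun h => ?_
    simpa using ((isLushTail_cons 1 c.blocks).mp h).1 rfl

theorem sum_lushTailWeight_cons (k m : ℕ) :
    ∑ c : Composition m, lushTailWeight g ((k + 2) :: c.blocks)
      = g (k + 1) * coeff m (lushTailSeries g) := by
  simp [lushTailSeries, lushTailWeight, Finset.mul_sum, isLushTail_cons, blockWeight]

theorem sum_lushRootWeight_cons (a m : ℕ) :
    ∑ c : Composition m, lushRootWeight g (a :: c.blocks)
      = g (a - 1) * coeff m (lushTailSeries g - 1) := by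
  rcases m with _ | m
  · rw [Composition.sum_blocks_zero fun l => lushRootWeight g (a :: l)]
    simp [lushRootWeight, isLushRoot_cons, constantCoeff_lushTailSeries]
  · simp [lushTailSeries, lushTailWeight, lushRootWeight, Finset.mul_sum, isLushRoot_cons,
      blockWeight]

theorem lushTailSeries_eq :
    lushTailSeries g =
      1 + C (g 0 : ℚ) * X + (genFun g - C (g 0 : ℚ) * X) * lushTailSeries g := by
  ext (_ | n)
  · simp [constantCoeff_lushTailSeries, genFun_eq_X_mul]
  · have hsum := coeff_succ_genFun_mul g (lushTailSeries g) n
    rw [Finset.sum_range_succ'] at hsum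
    rw [lushTailSeries, coeff_mk, Composition.sum_blocks_succ, Finset.sum_range_succ',
      ← lushTailSeries]
    simp only [sum_lushTailWeight_one_cons, sum_lushTailWeight_cons, map_add, sub_mul, map_sub,
      hsum, mul_assoc, coeff_C_mul, coeff_succ_X_mul, coeff_one,
      coeff_X, Nat.sub_zero, Nat.add_eq_right, Nat.add_one_ne_zero, if_false, mul_ite, mul_one,
      mul_zero]
    ring

theorem lushRootSeries_eq : lushRootSeries g = genFun g * (lushTailSeries g - 1) := by
  ext (_ | n)
  · rw [lushRootSeries, coeff_mk, Composition.sum_blocks_zero]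
    simp [lushRootWeight, IsLushRoot, genFun_eq_X_mul]
  · rw [lushRootSeries, coeff_mk, Composition.sum_blocks_succ, coeff_succ_genFun_mul]
    simp only [sum_lushRootWeight_cons, add_tsub_cancel_right]

theorem coeff_one_lushTailSeries : coeff 1 (lushTailSeries g) = g 0 := by
  rw [lushTailSeries, coeff_mk, Composition.sum_blocks_succ, Finset.sum_range_one,
    sum_lushTailWeight_one_cons, if_pos rfl]

theorem coeff_lushRootSeries_of_le_one {n : ℕ} (hn : n ≤ 1) : coeff n (lushRootSeries g) = 0 := by
  rw [lushRootSeries, coeff_mk]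
  refine Finset.sum_eq_zero fun c _ => if_neg fun h => ?_
  have := c.length_le
  simp only [Composition.length] at this
  exact absurd h.1 (by omega)

theorem coeff_two_lushRootSeries : coeff 2 (lushRootSeries g) = (g 0 : ℚ) ^ 2 := by
  rw [lushRootSeries_eq, coeff_succ_genFun_mul]
  simp [Finset.sum_range_succ, coeff_one_lushTailSeries, constantCoeff_lushTailSeries, sq]

end LushSeries

theorem lush_generating_function_quadratic
    (g : ℕ → ℕ) (hg0 : g 0 = 1) (hg1 : g 1 = 1)
    (hgrec : ∀ n : ℕ, 2 ≤ n →
      g n = ∑ c : Composition (n + 1),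
        if 1 < c.blocks.length ∧
            (∀ i : Fin c.blocks.length,
              c.blocks.get i = 1 → (i : ℕ) = 0 ∨ (i : ℕ) = c.blocks.length - 1)
        then (c.blocks.map (fun j => g (j - 1))).prod else 0) :
    2 * genFun g ^ 2 - (2 * PowerSeries.X + 1) * genFun g
        + PowerSeries.X + PowerSeries.X ^ 2 = 0 ∧
    (2 * PowerSeries.X + 1 - 4 * genFun g) ^ 2
        = 1 - 4 * PowerSeries.X - 4 * PowerSeries.X ^ 2 := by
  have hG : genFun g = X + lushRootSeries g := by
    ext (_ | _ | _ | n)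
    · rw [map_add, coeff_lushRootSeries_of_le_one g zero_le_one]
      simp [genFun]
    · rw [map_add, coeff_lushRootSeries_of_le_one g le_rfl]
      simp [genFun, hg0]
    · simp [genFun, coeff_X, coeff_two_lushRootSeries, hg0, hg1]
    · simp [genFun, coeff_X, lushRootSeries, lushRootWeight, IsLushRoot, blockWeight,
        hgrec (n + 2) (by omega), Function.comp_def]
      -- the two sums differ only in their `Decidable` instances
      rfl
  have hT := lushTailSeries_eq g
  rw [hg0, Nat.cast_one, map_one, one_mul] at hT
  have hR := lushRootSeries_eq g
  have h : 2 * genFun g ^ 2 - (2 * X + 1) * genFun g + X + X ^ 2 = 0 := by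
    linear_combination (genFun g - 1 - X) * (hG + hR) - genFun g * hT
  exact ⟨h, by linear_combination 8 * h⟩
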